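/- No binary classic integral quadratic form over ℤ₂ is universal: for every symmetric 2×2 matrix A with entries in ℤ₂ there exists c ∈ ℤ₂ such that the equation xᵀ A x = c has no solution x ∈ ℤ₂². -/
import Mathlib


open Matrix

set_option maxHeartbeats 4000000 in
private lemma key_zmod8 : ∀ a b c : ZMod 8, ∃ r : ZMod 8, ∀ u v : ZMod 8,
    u * (a * u + b * v) + v * (b * u + c * v) ≠ r := by decide

theorem no_binary_universal (A : Matrix (Fin 2) (Fin 2) ℤ_[2]) (hA : A.IsSymm) :
    ∃ c : ℤ_[2], ¬ ∃ x : Fin 2 → ℤ_[2], x ⬝ᵥ A.mulVec x = c := by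
  have h8 : (2:ℕ)^3 = 8 := by norm_num
  let φ : ℤ_[2] →+* ZMod 8 := (h8 ▸ PadicInt.toZModPow 3 : ℤ_[2] →+* ZMod 8)
  obtain ⟨r, hr⟩ := key_zmod8 (φ (A 0 0)) (φ (A 0 1)) (φ (A 1 1))
  refine ⟨(r.val : ℤ_[2]), ?_⟩
  rintro ⟨x, hx⟩
  apply hr (φ (x 0)) (φ (x 1))
  have h10 : A 1 0 = A 0 1 := by
    conv_lhs => rw [← hA]; rw [Matrix.transpose_apply]
  have := congrArg φ hx
  simp only [dotProduct, Matrix.mulVec, Fin.sum_univ_two, h10,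
    map_add, _root_.map_mul, map_natCast] at this
  rw [this]
  simp [ZMod.natCast_val, ZMod.cast_id]
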